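/- Let β > −1/2, γ > −1, n ∈ ℕ and 1 ≤ p < ∞. Let f be a measurable function on Λ_{a,b,c} with ∫_{Λ_{a,b,c}} |f|^p W^{(0,β,γ)}_{a,b,c} du dv < ∞. Then inf_{g} (∫_{Λ_{a,b,c}} |f−g|^p W^{(0,β,γ)}_{a,b,c} du dv)^{1/p} = (b−a)^{1/p} · inf_{G} (∫_{B²₊} |f∘ψ⁻¹ − G|^p W_B^{(0,β,γ)} ds dt)^{1/p}, where both infima are taken over polynomials in two variables of degree at most n that are even in the second variable. -/

import Mathlib

open MeasureTheory

noncomputable section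

/-- The upper half `Λ_{a,b,c}` of the fully symmetric domain `Ω_{a,b,c}`. -/
def LamSet (a b c : ℝ) : Set (ℝ × ℝ) :=
  {p | a + (c - a) * p.1 ^ 2 ≤ p.2 ^ 2 ∧ p.2 ^ 2 ≤ b + (c - b) * p.1 ^ 2 ∧
       |p.1| ≤ 1 ∧ 0 ≤ p.2}

/-- The closed upper half-disk `B²₊`. -/
def Bplus : Set (ℝ × ℝ) := {p | p.1 ^ 2 + p.2 ^ 2 ≤ 1 ∧ 0 ≤ p.2}

/-- The inverse map `ψ⁻¹(s,t) = (s, sqrt((b−a)t² + a(1−s²) + cs²))`. -/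
def psiInvMap (a b c : ℝ) (p : ℝ × ℝ) : ℝ × ℝ :=
  (p.1, Real.sqrt ((b - a) * p.2 ^ 2 + a * (1 - p.1 ^ 2) + c * p.1 ^ 2))

/-- The weight `W^{(0,β,γ)}_{a,b,c}`. -/
def W0abc (a b c β γ : ℝ) (p : ℝ × ℝ) : ℝ :=
  |p.2| * ((-a + (a - c) * p.1 ^ 2 + p.2 ^ 2) / (b - a)) ^ (β - 1 / 2) *
    ((b - (b - c) * p.1 ^ 2 - p.2 ^ 2) / (b - a)) ^ γ

/-- The weight `W_B^{(0,β,γ)}(s,t) = |t|^{2β} (1−s²−t²)^{γ}` on the disk. -/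
def WB0 (β γ : ℝ) (p : ℝ × ℝ) : ℝ :=
  |p.2| ^ (2 * β) * (1 - p.1 ^ 2 - p.2 ^ 2) ^ γ

/-- Evaluation of a polynomial in two variables at a point of `ℝ²`. -/
def ev2 (P : MvPolynomial (Fin 2) ℝ) (p : ℝ × ℝ) : ℝ :=
  MvPolynomial.eval ![p.1, p.2] P

/-- A polynomial of two variables is even in the second variable. -/
def EvenSnd (P : MvPolynomial (Fin 2) ℝ) : Prop :=
  ∀ u v : ℝ, ev2 P (u, -v) = ev2 P (u, v)

/-!
The map `ψ⁻¹` sends the half-disk `B²₊` bijectively onto `Λ_{a,b,c}`, with Jacobian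
determinant `(b - a) t / v`, where `v² = (b - a) t² + a (1 - s²) + c s²`. Since
`(-a + (a - c) s² + v²)/(b - a) = t²` and `(b - (b - c) s² - v²)/(b - a) = 1 - s² - t²`,
this Jacobian turns `W^{(0,β,γ)}_{a,b,c} ∘ ψ⁻¹` into `(b - a) W_B^{(0,β,γ)}`, so every weighted
`L^q` error on `Λ_{a,b,c}` is `(b - a)^{1/q}` times the corresponding error on `B²₊`.
Because `v²` is a quadratic in `(s, t²)` and conversely `t²` is a quadratic in `(s, v²)`,
composing with `ψ⁻¹` matches polynomials of degree `≤ n` that are even in the second variable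
on the two domains, so the two sets of errors differ exactly by that factor.
-/

open MvPolynomial

lemma ev2_eq_sum (P : MvPolynomial (Fin 2) ℝ) (x : ℝ × ℝ) :
    ev2 P x = ∑ m ∈ P.support, coeff m P * x.1 ^ m 0 * x.2 ^ m 1 := by
  rw [ev2, eval_eq']
  refine Finset.sum_congr rfl fun m _ => ?_
  rw [Fin.prod_univ_two, Matrix.cons_val_zero, Matrix.cons_val_one, Matrix.cons_val_zero, mul_assoc]

/-- For `P` even in the second variable this is `P(X₀, √R)`: each `X₁ ^ (2k)` becomes `R ^ k`,
and the odd monomials, whose coefficients vanish, are dropped. -/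
def substSqSnd {K : Type*} [CommSemiring K] (R P : MvPolynomial (Fin 2) K) :
    MvPolynomial (Fin 2) K :=
  ∑ m ∈ P.support with Even (m 1), C (coeff m P) * X 0 ^ m 0 * R ^ (m 1 / 2)

lemma ev2_substSqSnd (R P : MvPolynomial (Fin 2) ℝ) (x : ℝ × ℝ) :
    ev2 (substSqSnd R P) x
      = ∑ m ∈ P.support with Even (m 1), coeff m P * x.1 ^ m 0 * ev2 R x ^ (m 1 / 2) := by
  simp [substSqSnd, ev2]

lemma totalDegree_substSqSnd_le {K : Type*} [CommSemiring K] {R : MvPolynomial (Fin 2) K}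
    (hR : R.totalDegree ≤ 2) (P : MvPolynomial (Fin 2) K) :
    (substSqSnd R P).totalDegree ≤ P.totalDegree := by
  refine (totalDegree_finsetSum _ _).trans (Finset.sup_le fun m hm => ?_)
  obtain ⟨hm, -⟩ := Finset.mem_filter.1 hm
  have hdeg : m 0 + m 1 ≤ P.totalDegree := by
    simpa [Finsupp.sum_fintype, Fin.sum_univ_two] using le_totalDegree hm
  have hmon : (C (coeff m P) * X 0 ^ m 0 : MvPolynomial (Fin 2) K).totalDegree ≤ m 0 := by
    rw [C_mul_X_pow_eq_monomial]
    exact (totalDegree_monomial_le _ _).trans (by simp)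
  have hpow := totalDegree_pow R (m 1 / 2)
  have hmul := totalDegree_mul (C (coeff m P) * X 0 ^ m 0) (R ^ (m 1 / 2))
  have : m 1 / 2 * R.totalDegree ≤ m 1 / 2 * 2 := Nat.mul_le_mul_left _ hR
  omega

lemma evenSnd_substSqSnd {R : MvPolynomial (Fin 2) ℝ} (hR : EvenSnd R)
    (P : MvPolynomial (Fin 2) ℝ) : EvenSnd (substSqSnd R P) := by
  intro u v
  simp only [ev2_substSqSnd, hR u v]

lemma EvenSnd.ev2_eq_ev2_substSqSnd {P : MvPolynomial (Fin 2) ℝ} (hP : EvenSnd P)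
    (R : MvPolynomial (Fin 2) ℝ) {s t v : ℝ} (hv : v ^ 2 = ev2 R (s, t)) :
    ev2 P (s, v) = ev2 (substSqSnd R P) (s, t) := by
  have hsymm : ev2 P (s, v) = (ev2 P (s, v) + ev2 P (s, -v)) / 2 := by rw [hP]; ring
  rw [hsymm, ev2_eq_sum, ev2_eq_sum, ← Finset.sum_add_distrib, Finset.sum_div,
    ev2_substSqSnd, Finset.sum_filter]
  refine Finset.sum_congr rfl fun m _ => ?_
  rcases Nat.even_or_odd (m 1) with h | h
  · rw [if_pos h, h.neg_pow, ← hv, ← pow_mul, Nat.mul_div_cancel' h.two_dvd]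
    ring
  · rw [if_neg (Nat.not_even_iff_odd.2 h), h.neg_pow]
    ring

def quadSnd (α β γ : ℝ) : MvPolynomial (Fin 2) ℝ := C α * X 1 ^ 2 + C β * X 0 ^ 2 + C γ

lemma ev2_quadSnd (α β γ : ℝ) (x : ℝ × ℝ) :
    ev2 (quadSnd α β γ) x = α * x.2 ^ 2 + β * x.1 ^ 2 + γ := by
  simp [quadSnd, ev2]

lemma totalDegree_quadSnd_le (α β γ : ℝ) : (quadSnd α β γ).totalDegree ≤ 2 := by
  have hmon : ∀ (r : ℝ) (i : Fin 2), (C r * X i ^ 2 : MvPolynomial (Fin 2) ℝ).totalDegree ≤ 2 :=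
    fun r i => (totalDegree_mul _ _).trans (by rw [totalDegree_C, totalDegree_X_pow])
  refine (totalDegree_add _ _).trans (max_le ((totalDegree_add _ _).trans
    (max_le (hmon _ _) (hmon _ _))) ?_)
  rw [totalDegree_C]
  omega

lemma evenSnd_quadSnd (α β γ : ℝ) : EvenSnd (quadSnd α β γ) := by
  intro u v
  simp only [ev2_quadSnd, neg_sq]

lemma EvenSnd.exists_ev2_eq_of_sq_eq {n : ℕ} {P : MvPolynomial (Fin 2) ℝ}
    (hdeg : P.totalDegree ≤ n) (hP : EvenSnd P) (α β γ : ℝ) :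
    ∃ Q : MvPolynomial (Fin 2) ℝ, Q.totalDegree ≤ n ∧ EvenSnd Q ∧
      ∀ s t v : ℝ, v ^ 2 = α * t ^ 2 + β * s ^ 2 + γ → ev2 P (s, v) = ev2 Q (s, t) :=
  ⟨substSqSnd (quadSnd α β γ) P,
    (totalDegree_substSqSnd_le (totalDegree_quadSnd_le α β γ) P).trans hdeg,
    evenSnd_substSqSnd (evenSnd_quadSnd α β γ) P,
    fun s t v hv => hP.ev2_eq_ev2_substSqSnd _ (by rw [ev2_quadSnd, hv])⟩

lemma volume_graph_eq_zero {g : ℝ → ℝ} (hg : Measurable g) :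
    volume {p : ℝ × ℝ | p.2 = g p.1} = 0 := by
  rw [Measure.volume_eq_prod, Measure.prod_apply (measurableSet_graph hg)]
  simp

lemma measurableSet_Bplus : MeasurableSet Bplus :=
  (measurableSet_le (f := fun p : ℝ × ℝ => p.1 ^ 2 + p.2 ^ 2) (by fun_prop) measurable_const).inter
    (measurableSet_le measurable_const measurable_snd)

section ChangeOfVariables

variable {a b c : ℝ}

def psiRadicand (a b c : ℝ) (p : ℝ × ℝ) : ℝ := (b - a) * p.2 ^ 2 + a * (1 - p.1 ^ 2) + c * p.1 ^ 2

lemma psiInvMap_eq (p : ℝ × ℝ) : psiInvMap a b c p = (p.1, √(psiRadicand a b c p)) := rfl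

lemma psiRadicand_nonneg (ha : 0 ≤ a) (hab : a < b) (hc : 0 ≤ c) {p : ℝ × ℝ} (hp : p ∈ Bplus) :
    0 ≤ psiRadicand a b c p := by
  have hs : p.1 ^ 2 ≤ 1 := by nlinarith [hp.1, sq_nonneg p.2]
  unfold psiRadicand
  have := mul_nonneg (sub_nonneg.2 hab.le) (sq_nonneg p.2)
  have := mul_nonneg ha (sub_nonneg.2 hs)
  have := mul_nonneg hc (sq_nonneg p.1)
  linarith

lemma psiRadicand_pos (ha : 0 ≤ a) (hab : a < b) (hc : 0 ≤ c) {p : ℝ × ℝ} (hp : p ∈ Bplus)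
    (ht : p.2 ≠ 0) : 0 < psiRadicand a b c p := by
  have hs : p.1 ^ 2 ≤ 1 := by nlinarith [hp.1, sq_nonneg p.2]
  unfold psiRadicand
  have := mul_pos (sub_pos.2 hab) (pow_pos (lt_of_le_of_ne hp.2 (Ne.symm ht)) 2)
  have := mul_nonneg ha (sub_nonneg.2 hs)
  have := mul_nonneg hc (sq_nonneg p.1)
  linarith

lemma sq_psiInvMap_snd (ha : 0 ≤ a) (hab : a < b) (hc : 0 ≤ c) {p : ℝ × ℝ} (hp : p ∈ Bplus) :
    (psiInvMap a b c p).2 ^ 2 = psiRadicand a b c p :=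
  Real.sq_sqrt (psiRadicand_nonneg ha hab hc hp)

lemma image_psiInvMap_Bplus (ha : 0 ≤ a) (hab : a < b) (hc : 0 ≤ c) :
    psiInvMap a b c '' Bplus = LamSet a b c := by
  have hba : 0 < b - a := sub_pos.2 hab
  ext q
  constructor
  · rintro ⟨p, hp, rfl⟩
    have hs : p.1 ^ 2 ≤ 1 := by nlinarith [hp.1, sq_nonneg p.2]
    rw [psiInvMap_eq]
    refine ⟨?_, ?_, (sq_le_one_iff_abs_le_one _).1 hs, Real.sqrt_nonneg _⟩
    all_goals
      rw [Real.sq_sqrt (psiRadicand_nonneg ha hab hc hp), psiRadicand]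
      nlinarith [sq_nonneg p.2, hp.1]
  · rintro ⟨hlo, hhi, -, hv⟩
    set w := (q.2 ^ 2 - a - (c - a) * q.1 ^ 2) / (b - a)
    have hw : 0 ≤ w := div_nonneg (by linarith) hba.le
    have hw1 : w ≤ 1 - q.1 ^ 2 := by
      rw [div_le_iff₀ hba]
      nlinarith
    refine ⟨(q.1, √w), ⟨by rw [Real.sq_sqrt hw]; linarith, Real.sqrt_nonneg _⟩, ?_⟩
    have hrad : psiRadicand a b c (q.1, √w) = q.2 ^ 2 := by
      simp only [psiRadicand, Real.sq_sqrt hw, w]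
      field_simp
      ring
    rw [psiInvMap_eq, hrad, Real.sqrt_sq hv]

lemma injOn_psiInvMap (ha : 0 ≤ a) (hab : a < b) (hc : 0 ≤ c) :
    Set.InjOn (psiInvMap a b c) Bplus := by
  intro p hp p' hp' h
  have h1 : p.1 = p'.1 := (Prod.ext_iff.1 h).1
  have hrad : psiRadicand a b c p = psiRadicand a b c p' := by
    rw [← sq_psiInvMap_snd ha hab hc hp, ← sq_psiInvMap_snd ha hab hc hp', h]
  have h2 : p.2 ^ 2 = p'.2 ^ 2 := by
    simp only [psiRadicand, h1] at hrad
    exact mul_left_cancel₀ (sub_pos.2 hab).ne' (by linarith)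
  exact Prod.ext h1 ((pow_left_inj₀ hp.2 hp'.2 two_ne_zero).1 h2)

def psiInvFDeriv (a b c : ℝ) (p : ℝ × ℝ) : ℝ × ℝ →L[ℝ] ℝ × ℝ :=
  (ContinuousLinearMap.fst ℝ ℝ ℝ).prod ((√(psiRadicand a b c p))⁻¹ •
    (((c - a) * p.1) • ContinuousLinearMap.fst ℝ ℝ ℝ
      + ((b - a) * p.2) • ContinuousLinearMap.snd ℝ ℝ ℝ))

lemma hasFDerivAt_psiInvMap {p : ℝ × ℝ} (hp : psiRadicand a b c p ≠ 0) :
    HasFDerivAt (psiInvMap a b c) (psiInvFDeriv a b c p) p := by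
  have hrad : HasFDerivAt (psiRadicand a b c)
      ((2 * (c - a) * p.1) • ContinuousLinearMap.fst ℝ ℝ ℝ
        + (2 * (b - a) * p.2) • ContinuousLinearMap.snd ℝ ℝ ℝ) p := by
    have h1 := hasFDerivAt_fst (𝕜 := ℝ) (p := p)
    have h2 := hasFDerivAt_snd (𝕜 := ℝ) (p := p)
    refine ((((h2.pow 2).const_mul (b - a)).add
      (((h1.pow 2).const_sub 1).const_mul a)).add ((h1.pow 2).const_mul c)).congr_fderiv ?_
    ext <;> simp <;> ring
  refine hasFDerivAt_fst.prodMk ((hrad.sqrt hp).congr_fderiv ?_)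
  ext <;> simp <;> field_simp

lemma det_psiInvFDeriv (p : ℝ × ℝ) :
    (psiInvFDeriv a b c p).det = (b - a) * p.2 / √(psiRadicand a b c p) := by
  rw [ContinuousLinearMap.det, ← LinearMap.det_toMatrix (Module.Basis.finTwoProd ℝ),
    Matrix.det_fin_two]
  simp [LinearMap.toMatrix_apply, psiInvFDeriv]
  ring

lemma W0abc_psiInvMap (ha : 0 ≤ a) (hab : a < b) (hc : 0 ≤ c) (β γ : ℝ) {p : ℝ × ℝ}
    (hp : p ∈ Bplus) :
    W0abc a b c β γ (psiInvMap a b c p)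
      = √(psiRadicand a b c p) * (p.2 ^ 2) ^ (β - 1 / 2) * (1 - p.1 ^ 2 - p.2 ^ 2) ^ γ := by
  have hba : b - a ≠ 0 := (sub_pos.2 hab).ne'
  have hsq := sq_psiInvMap_snd ha hab hc hp
  rw [psiInvMap_eq] at hsq ⊢
  rw [W0abc, hsq, abs_of_nonneg (Real.sqrt_nonneg _), psiRadicand]
  congr 3 <;> field_simp <;> ring

lemma abs_det_mul_W0abc_psiInvMap (ha : 0 ≤ a) (hab : a < b) (hc : 0 ≤ c) (β γ : ℝ)
    {p : ℝ × ℝ} (hp : p ∈ Bplus) (ht0 : p.2 ≠ 0) :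
    |(psiInvFDeriv a b c p).det| * W0abc a b c β γ (psiInvMap a b c p)
      = (b - a) * WB0 β γ p := by
  have ht : 0 < p.2 := lt_of_le_of_ne hp.2 (Ne.symm ht0)
  have hV : 0 < √(psiRadicand a b c p) := Real.sqrt_pos.2 (psiRadicand_pos ha hab hc hp ht0)
  have hpow : p.2 ^ (2 * β) = p.2 * (p.2 ^ 2) ^ (β - 1 / 2) := by
    rw [show 2 * β = 1 + 2 * (β - 1 / 2) by ring, Real.rpow_add ht, Real.rpow_one,
      Real.rpow_mul ht.le]
    norm_num
  rw [det_psiInvFDeriv, W0abc_psiInvMap ha hab hc β γ hp, WB0, abs_of_pos ht, hpow,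
    abs_of_pos (by have := sub_pos.2 hab; positivity)]
  field_simp

lemma setIntegral_LamSet_mul_W0abc (ha : 0 ≤ a) (hab : a < b) (hc : 0 ≤ c) (β γ : ℝ)
    (g : ℝ × ℝ → ℝ) :
    ∫ p in LamSet a b c, g p * W0abc a b c β γ p
      = (b - a) * ∫ p in Bplus, g (psiInvMap a b c p) * WB0 β γ p := by
  set Z : Set (ℝ × ℝ) := {p | p.2 = 0}
  have hZ : volume Z = 0 := volume_graph_eq_zero (g := fun _ => 0) measurable_const
  have hs : MeasurableSet (Bplus \ Z) :=
    measurableSet_Bplus.diff (measurableSet_eq_fun measurable_snd measurable_const)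
  have hinj := injOn_psiInvMap ha hab hc
  -- the segment `t = 0` of `B²₊` is mapped into the graph of `u ↦ √(a (1 - u²) + c u²)`
  have himage : psiInvMap a b c '' (Bplus \ Z) =ᵐ[volume] LamSet a b c := by
    rw [hinj.image_sdiff, image_psiInvMap_Bplus ha hab hc]
    refine sdiff_null_ae_eq_self (measure_mono_null ?_
      (volume_graph_eq_zero (g := fun u => (psiInvMap a b c (u, 0)).2)
        (by simp only [psiInvMap]; fun_prop)))
    rintro _ ⟨p, ⟨-, hp⟩, rfl⟩
    simp only [Z, Set.mem_ofPred_eq] at hp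
    simp [psiInvMap, hp]
  calc ∫ p in LamSet a b c, g p * W0abc a b c β γ p
      = ∫ p in psiInvMap a b c '' (Bplus \ Z), g p * W0abc a b c β γ p :=
        setIntegral_congr_set himage.symm
    _ = ∫ p in Bplus \ Z, |(psiInvFDeriv a b c p).det|
          • (g (psiInvMap a b c p) * W0abc a b c β γ (psiInvMap a b c p)) :=
        integral_image_eq_integral_abs_det_fderiv_smul volume hs
          (fun p hp => (hasFDerivAt_psiInvMap
            (psiRadicand_pos ha hab hc hp.1 hp.2).ne').hasFDerivWithinAt)
          (hinj.mono Set.sdiff_subset) _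
    _ = ∫ p in Bplus \ Z, (b - a) * (g (psiInvMap a b c p) * WB0 β γ p) :=
        setIntegral_congr_fun hs fun p hp => by
          rw [smul_eq_mul, mul_left_comm, abs_det_mul_W0abc_psiInvMap ha hab hc β γ hp.1 hp.2]
          ring
    _ = (b - a) * ∫ p in Bplus, g (psiInvMap a b c p) * WB0 β γ p := by
        rw [integral_const_mul, setIntegral_congr_set (sdiff_null_ae_eq_self hZ)]

lemma approxError_LamSet_eq (ha : 0 ≤ a) (hab : a < b) (hc : 0 ≤ c) (β γ q : ℝ)
    (f : ℝ × ℝ → ℝ) {P Q : MvPolynomial (Fin 2) ℝ}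
    (hPQ : ∀ p ∈ Bplus, ev2 P (psiInvMap a b c p) = ev2 Q p) :
    (∫ p in LamSet a b c, |f p - ev2 P p| ^ q * W0abc a b c β γ p) ^ (1 / q)
      = (b - a) ^ (1 / q)
        * (∫ p in Bplus, |f (psiInvMap a b c p) - ev2 Q p| ^ q * WB0 β γ p) ^ (1 / q) := by
  rw [setIntegral_LamSet_mul_W0abc ha hab hc β γ (fun p => |f p - ev2 P p| ^ q),
    setIntegral_congr_fun measurableSet_Bplus fun p hp => by rw [hPQ p hp]]
  refine Real.mul_rpow (sub_nonneg.2 hab.le)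
    (setIntegral_nonneg measurableSet_Bplus fun p hp => ?_)
  have : 0 ≤ 1 - p.1 ^ 2 - p.2 ^ 2 := by linarith [hp.1]
  unfold WB0
  positivity

lemma EvenSnd.exists_comp_psiInvMap_eq (ha : 0 ≤ a) (hab : a < b) (hc : 0 ≤ c) {n : ℕ}
    {P : MvPolynomial (Fin 2) ℝ} (hdeg : P.totalDegree ≤ n) (hP : EvenSnd P) :
    ∃ Q : MvPolynomial (Fin 2) ℝ, Q.totalDegree ≤ n ∧ EvenSnd Q ∧
      ∀ p ∈ Bplus, ev2 P (psiInvMap a b c p) = ev2 Q p := by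
  obtain ⟨Q, hQdeg, hQ, hPQ⟩ := hP.exists_ev2_eq_of_sq_eq hdeg (b - a) (c - a) a
  refine ⟨Q, hQdeg, hQ, fun p hp => hPQ p.1 p.2 (psiInvMap a b c p).2 ?_⟩
  rw [sq_psiInvMap_snd ha hab hc hp, psiRadicand]
  ring

lemma EvenSnd.exists_eq_comp_psiInvMap (ha : 0 ≤ a) (hab : a < b) (hc : 0 ≤ c) {n : ℕ}
    {Q : MvPolynomial (Fin 2) ℝ} (hdeg : Q.totalDegree ≤ n) (hQ : EvenSnd Q) :
    ∃ P : MvPolynomial (Fin 2) ℝ, P.totalDegree ≤ n ∧ EvenSnd P ∧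
      ∀ p ∈ Bplus, ev2 P (psiInvMap a b c p) = ev2 Q p := by
  obtain ⟨P, hPdeg, hP, hQP⟩ :=
    hQ.exists_ev2_eq_of_sq_eq hdeg (b - a)⁻¹ ((a - c) / (b - a)) (-a / (b - a))
  refine ⟨P, hPdeg, hP, fun p hp => (hQP p.1 (psiInvMap a b c p).2 p.2 ?_).symm⟩
  have hba : b - a ≠ 0 := (sub_pos.2 hab).ne'
  rw [sq_psiInvMap_snd ha hab hc hp, psiRadicand]
  field_simp
  ring

end ChangeOfVariables

open scoped Pointwise in
lemma sInf_setOf_eq_mul_sInf {ι : Type*} {S : ι → Prop} {F G : ι → ℝ} {k : ℝ} (hk : 0 ≤ k)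
    (hFG : ∀ i, S i → ∃ j, S j ∧ F i = k * G j) (hGF : ∀ j, S j → ∃ i, S i ∧ F i = k * G j) :
    sInf {r | ∃ i, S i ∧ r = F i} = k * sInf {r | ∃ j, S j ∧ r = G j} := by
  have hsets : {r | ∃ i, S i ∧ r = F i} = k • {r | ∃ j, S j ∧ r = G j} := by
    ext r
    simp only [Set.mem_smul_set, Set.mem_ofPred_eq, smul_eq_mul]
    constructor
    · rintro ⟨i, hi, rfl⟩
      obtain ⟨j, hj, h⟩ := hFG i hi
      exact ⟨G j, ⟨j, hj, rfl⟩, h.symm⟩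
    · rintro ⟨_, ⟨j, hj, rfl⟩, rfl⟩
      obtain ⟨i, hi, h⟩ := hGF j hj
      exact ⟨i, hi, h.symm⟩
  rw [hsets, Real.sInf_smul_of_nonneg hk, smul_eq_mul]

theorem best_approximation_transfers_general
    (a b c β γ : ℝ) (ha : 0 ≤ a) (hab : a < b) (hc : 0 ≤ c) (n : ℕ) (q : ℝ) (f : ℝ × ℝ → ℝ) :
    sInf {r : ℝ | ∃ P : MvPolynomial (Fin 2) ℝ, P.totalDegree ≤ n ∧ EvenSnd P ∧
        r = (∫ p in LamSet a b c, |f p - ev2 P p| ^ q * W0abc a b c β γ p) ^ (1 / q)}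
      = (b - a) ^ (1 / q) *
        sInf {r : ℝ | ∃ P : MvPolynomial (Fin 2) ℝ, P.totalDegree ≤ n ∧ EvenSnd P ∧
          r = (∫ p in Bplus,
                |f (psiInvMap a b c p) - ev2 P p| ^ q * WB0 β γ p) ^ (1 / q)} := by
  simp only [← and_assoc]
  refine sInf_setOf_eq_mul_sInf (Real.rpow_nonneg (sub_nonneg.2 hab.le) _)
    (fun P ⟨hdeg, hP⟩ => ?_) (fun Q ⟨hdeg, hQ⟩ => ?_)
  · obtain ⟨Q, hQdeg, hQ, hPQ⟩ := hP.exists_comp_psiInvMap_eq ha hab hc hdeg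
    exact ⟨Q, ⟨hQdeg, hQ⟩, approxError_LamSet_eq ha hab hc β γ q f hPQ⟩
  · obtain ⟨P, hPdeg, hP, hPQ⟩ := hQ.exists_eq_comp_psiInvMap ha hab hc hdeg
    exact ⟨P, ⟨hPdeg, hP⟩, approxError_LamSet_eq ha hab hc β γ q f hPQ⟩

/-- the error of best `L^p` approximation by polynomials of degree at most
`n` that are even in the second variable is the same on `Λ_{a,b,c}` and on `B²₊`, up to
the factor `(b−a)^{1/p}`. -/
theorem best_approximation_transfers
    (a b c β γ : ℝ) (ha : 0 ≤ a) (hab : a < b) (hc : 0 ≤ c)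
    (hβ : -(1 : ℝ) / 2 < β) (hγ : -1 < γ) (n : ℕ) (q : ℝ) (hq : 1 ≤ q)
    (f : ℝ × ℝ → ℝ) (hf : Measurable f)
    (hfint : IntegrableOn (fun p => |f p| ^ q * W0abc a b c β γ p) (LamSet a b c)) :
    sInf {r : ℝ | ∃ P : MvPolynomial (Fin 2) ℝ, P.totalDegree ≤ n ∧ EvenSnd P ∧
        r = (∫ p in LamSet a b c, |f p - ev2 P p| ^ q * W0abc a b c β γ p) ^ (1 / q)}
      = (b - a) ^ (1 / q) *
        sInf {r : ℝ | ∃ P : MvPolynomial (Fin 2) ℝ, P.totalDegree ≤ n ∧ EvenSnd P ∧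
          r = (∫ p in Bplus,
                |f (psiInvMap a b c p) - ev2 P p| ^ q * WB0 β γ p) ^ (1 / q)} :=
  best_approximation_transfers_general a b c β γ ha hab hc n q f
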